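/- arXiv:2512.18424 — 4 statements merged into one kernel-verified Lean document; each statement's English description precedes it below -/
import Mathlib

section
/- Let p be an odd prime and write p - 1 = 2^a · r with r odd and a = ν₂(p-1). Then 2p · σ_k(2p) ≡ 2 (mod φ(2p)) if and only if p ≡ 3 (mod 4) and r divides 2^{k+1} + 1. -/
/-!
Since `p ≡ 1 (mod p - 1)` and `φ(2p) = p - 1`, the product `2p · (1 + 2^k)(1 + p^k)` is
`4(1 + 2^k) = 2(2^(k+1) + 1) + 2` modulo `p - 1`, so the congruence says `2^a r ∣ 2m` with
`m = 2^(k+1) + 1` odd. That forces `a = 1`, i.e. `p ≡ 3 (mod 4)`, and `r ∣ m`.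
-/

open ArithmeticFunction
open scoped ArithmeticFunction.sigma

theorem ArithmeticFunction.sigma_apply_prime {k p : ℕ} (hp : p.Prime) : σ k p = 1 + p ^ k := by
  simpa [Finset.sum_range_succ] using sigma_apply_prime_pow (k := k) (i := 1) hp

theorem ArithmeticFunction.sigma_mul_of_primes_ne {k p q : ℕ} (hp : p.Prime) (hq : q.Prime)
    (hpq : p ≠ q) : σ k (p * q) = (1 + p ^ k) * (1 + q ^ k) := by
  rw [isMultiplicative_sigma.map_mul_of_coprime ((Nat.coprime_primes hp hq).2 hpq),
    sigma_apply_prime hp, sigma_apply_prime hq]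

theorem Nat.two_pow_mul_dvd_two_mul_iff {a r m : ℕ} (hr : Odd r) (hm : Odd m) :
    2 ^ a * r ∣ 2 * m ↔ a ≤ 1 ∧ r ∣ m := by
  have hr2 : r.Coprime 2 := Nat.coprime_two_right.2 hr
  constructor
  · intro h
    refine ⟨?_, hr2.dvd_of_dvd_mul_left (dvd_of_mul_left_dvd h)⟩
    by_contra! ha
    have : 2 * 2 ∣ 2 * m := (pow_dvd_pow 2 ha).trans (dvd_of_mul_right_dvd h)
    exact Nat.not_even_iff_odd.2 hm (even_iff_two_dvd.2 (Nat.dvd_of_mul_dvd_mul_left two_pos this))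
  · rintro ⟨ha, hrm⟩
    exact mul_dvd_mul (pow_dvd_pow 2 ha |>.trans (pow_one 2).dvd) hrm

theorem Nat.mod_four_eq_three_iff_of_sub_one_eq {p a r : ℕ} (hp : Odd p) (hr : Odd r)
    (h : p - 1 = 2 ^ a * r) : p % 4 = 3 ↔ a ≤ 1 := by
  obtain ⟨s, rfl⟩ := hr
  obtain ⟨t, rfl⟩ := hp
  rcases a with _ | _ | a
  · simp at h; omega
  · simp at h; omega
  · have : 4 ∣ 2 * t + 1 - 1 := h ▸ ⟨2 ^ a * (2 * s + 1), by ring⟩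
    omega

theorem two_mul_sigma_two_mul_modEq_iff {p k : ℕ} (hp : p.Prime) (hodd : Odd p) :
    2 * p * σ k (2 * p) ≡ 2 [MOD p - 1] ↔ p - 1 ∣ 2 * (2 ^ (k + 1) + 1) := by
  have hp1 : p ≡ 1 [MOD p - 1] := ((Nat.modEq_iff_dvd' hp.one_le).2 dvd_rfl).symm
  have h2p : 2 ≠ p := by rintro rfl; norm_num at hodd
  have : 2 * p * σ k (2 * p) ≡ 2 * (2 ^ (k + 1) + 1) + 2 [MOD p - 1] := by
    rw [sigma_mul_of_primes_ne Nat.prime_two hp h2p]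
    calc 2 * p * ((1 + 2 ^ k) * (1 + p ^ k))
        ≡ 2 * 1 * ((1 + 2 ^ k) * (1 + 1 ^ k)) [MOD p - 1] := by gcongr
      _ = _ := by ring
  rw [← Nat.add_modEq_right_iff]
  exact ⟨this.symm.trans, this.trans⟩

theorem stmt_4_general (p k a r : ℕ) (hp : p.Prime) (hodd : Odd p)
    (hr : Odd r) (hpr : p - 1 = 2 ^ a * r) :
    (2 * p) * (∑ d ∈ (2 * p).divisors, d ^ k) ≡ 2 [MOD (2 * p).totient] ↔
      p % 4 = 3 ∧ r ∣ 2 ^ (k + 1) + 1 := by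
  have hm : Odd (2 ^ (k + 1) + 1) := Even.add_one ((Nat.even_pow' k.succ_ne_zero).2 even_two)
  rw [← sigma_apply, Nat.totient_two_mul_of_odd hodd, Nat.totient_prime hp,
    two_mul_sigma_two_mul_modEq_iff hp hodd, hpr, Nat.two_pow_mul_dvd_two_mul_iff hr hm,
    Nat.mod_four_eq_three_iff_of_sub_one_eq hodd hr hpr]

theorem stmt_4 (p k a r : ℕ) (hp : p.Prime) (hodd : Odd p)
    (ha : a = (p - 1).factorization 2) (hr : Odd r) (hpr : p - 1 = 2 ^ a * r) :
    (2 * p) * (∑ d ∈ (2 * p).divisors, d ^ k) ≡ 2 [MOD (2 * p).totient] ↔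
      p % 4 = 3 ∧ r ∣ 2 ^ (k + 1) + 1 :=
  stmt_4_general p k a r hp hodd hr hpr
end

section
/- If k ≥ 1 and 22 · σ_k(22) ≡ 2 (mod φ(22)), then both 14 · σ_{k-1}(14) ≡ 2 (mod φ(14)) and 14 · σ_{k+1}(14) ≡ 2 (mod φ(14)). -/
private lemma p10 : ∀ n : ℕ, 2^(n+5) % 10 = 2^(n+1) % 10 := by
  intro n
  induction n with
  | zero => decide
  | succ n ih =>
    rw [pow_succ 2 (n+5), Nat.mul_mod, ih, ← Nat.mul_mod, ← pow_succ]

private lemma cyc10 (j r : ℕ) : 2^(4*j + r + 1) % 10 = 2^(r+1) % 10 := by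
  induction j with
  | zero => simp
  | succ j ih =>
    have e : 4*(j+1) + r + 1 = (4*j + r) + 5 := by ring
    rw [e, p10]; exact ih

private lemma p6 : ∀ n : ℕ, 2^(n+3) % 6 = 2^(n+1) % 6 := by
  intro n
  induction n with
  | zero => decide
  | succ n ih =>
    rw [pow_succ 2 (n+3), Nat.mul_mod, ih, ← Nat.mul_mod, ← pow_succ]

private lemma cyc6 (j r : ℕ) : 2^(2*j + r + 1) % 6 = 2^(r+1) % 6 := by
  induction j with
  | zero => simp
  | succ j ih =>
    have e : 2*(j+1) + r + 1 = (2*j + r) + 3 := by ring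
    rw [e, p6]; exact ih

private lemma concl (m : ℕ) (hm : 2 ∣ m) :
    14 * (∑ d ∈ (14 : ℕ).divisors, d ^ m) ≡ 2 [MOD Nat.totient 14] := by
  have hd : (14:ℕ).divisors = {1,2,7,14} := by decide
  have ht : Nat.totient 14 = 6 := by decide
  rw [hd, ht]
  have hsum : ∑ d ∈ ({1,2,7,14} : Finset ℕ), d ^ m = 1^m + (2^m + (7^m + 14^m)) := by
    simp [Finset.sum_insert, Finset.mem_insert]
  rw [hsum]
  have h7 : 7^m % 6 = 1 := by rw [Nat.pow_mod]; norm_num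
  have h14 : 14^m % 6 = 2^m % 6 := by simp [Nat.pow_mod]
  have h2 : 2^m % 6 = 1 ∨ 2^m % 6 = 4 := by
    obtain ⟨j, rfl⟩ := hm
    rcases Nat.eq_zero_or_pos j with rfl | hj
    · left; decide
    · right
      obtain ⟨t, rfl⟩ := Nat.exists_eq_add_of_le hj
      have e : 2*(1+t) = 2*t + 1 + 1 := by ring
      rw [e, cyc6]
      decide
  have h1 : (1:ℕ)^m = 1 := one_pow m
  show _ % 6 = 2 % 6
  omega

theorem stmt_7 (k : ℕ) (hk : 1 ≤ k)
    (h : 22 * (∑ d ∈ (22 : ℕ).divisors, d ^ k) ≡ 2 [MOD Nat.totient 22]) :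
    14 * (∑ d ∈ (14 : ℕ).divisors, d ^ (k - 1)) ≡ 2 [MOD Nat.totient 14] ∧
    14 * (∑ d ∈ (14 : ℕ).divisors, d ^ (k + 1)) ≡ 2 [MOD Nat.totient 14] := by
  -- first show k is odd (in fact k ≡ 1 mod 4)
  have hd : (22:ℕ).divisors = {1,2,11,22} := by decide
  have ht : Nat.totient 22 = 10 := by decide
  rw [hd, ht] at h
  have hsum : ∑ d ∈ ({1,2,11,22} : Finset ℕ), d ^ k = 1^k + (2^k + (11^k + 22^k)) := by
    simp [Finset.sum_insert, Finset.mem_insert]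
  rw [hsum] at h
  have h11 : 11^k % 10 = 1 := by rw [Nat.pow_mod]; norm_num
  have h22 : 22^k % 10 = 2^k % 10 := by simp [Nat.pow_mod]
  have h1 : (1:ℕ)^k = 1 := one_pow k
  have h' : (22 * (1^k + (2^k + (11^k + 22^k)))) % 10 = 2 % 10 := h
  -- decompose k
  obtain ⟨j, r, hr, rfl⟩ : ∃ j r, r < 4 ∧ k = 4*j + r + 1 := by
    exact ⟨(k-1)/4, (k-1)%4, by omega, by omega⟩
  have hpow := cyc10 j r
  interval_cases r
  · -- r = 0 : k ≡ 1 mod 4, hypothesis consistent; k-1 = 4j, k+1 = 4j+2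
    have e1 : 4*j + 0 + 1 - 1 = 2*(2*j) := by omega
    have e2 : 4*j + 0 + 1 + 1 = 2*(2*j+1) := by ring
    rw [e1, e2]
    exact ⟨concl _ ⟨2*j, by ring⟩, concl _ ⟨2*j+1, by ring⟩⟩
  · exfalso; norm_num at hpow; omega
  · exfalso; norm_num at hpow; omega
  · exfalso; norm_num at hpow; omega
end

section
/- Let p ≥ 5 be prime with p ≡ 3 (mod 4), r = (p-1)/2, and suppose t₀ ≥ 2 is even with 2^{t₀} ≡ -1 (mod r) and t₀ minimal with this property. Then for every k ≥ 1 such that 2p · σ_k(2p) ≡ 2 (mod φ(2p)), both 14 · σ_{k-1}(14) ≡ 2 (mod φ(14)) and 14 · σ_{k+1}(14) ≡ 2 (mod φ(14)). -/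
-- the 14 side
lemma aux14 (m : ℕ) (hm : Even m) :
    14 * (∑ d ∈ (14 : ℕ).divisors, d ^ m) ≡ 2 [MOD Nat.totient 14] := by
  have hd : (14 : ℕ).divisors = {1, 2, 7, 14} := by decide
  have ht : Nat.totient 14 = 6 := by decide
  rw [hd, ht]
  have hsum : ∑ d ∈ ({1,2,7,14} : Finset ℕ), d ^ m = 1 + 2^m + 7^m + 14^m := by
    simp [Finset.sum_insert, Finset.mem_insert]
    ring
  rw [hsum, ← ZMod.natCast_eq_natCast_iff]
  push_cast
  obtain ⟨j, rfl⟩ := hm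
  have h4 : ∀ j : ℕ, (4 : ZMod 6) ^ j * 4 = 4 := by
    intro j; induction j with
    | zero => rfl
    | succ n ih => rw [pow_succ, mul_assoc, show ((4:ZMod 6)*4) = 4 from rfl, ih]
  have h2 : (2 : ZMod 6) ^ (j + j) = 4 ^ j := by
    rw [← two_mul, pow_mul]; norm_num
  have h7 : (7 : ZMod 6) = 1 := by decide
  have h14 : (14 : ZMod 6) = 2 := by decide
  rw [h7, h14, h2, one_pow]
  have e : (2:ZMod 6) * (1 + 4^j + 1 + 4^j) = 4^j * 4 + 4 := by ring
  rw [e, h4 j]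
  decide

theorem stmt_15 (p r t₀ : ℕ) (hp : p.Prime) (hp5 : 5 ≤ p) (hp4 : p % 4 = 3)
    (hr : r = (p - 1) / 2) (ht2 : 2 ≤ t₀) (hte : Even t₀)
    (ht : (2 : ZMod r) ^ t₀ = -1)
    (hmin : ∀ t, 1 ≤ t → (2 : ZMod r) ^ t = -1 → t₀ ≤ t)
    (k : ℕ) (hk : 1 ≤ k)
    (h : (2 * p) * (∑ d ∈ (2 * p).divisors, d ^ k) ≡ 2 [MOD (2 * p).totient]) :
    14 * (∑ d ∈ (14 : ℕ).divisors, d ^ (k - 1)) ≡ 2 [MOD Nat.totient 14] ∧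
    14 * (∑ d ∈ (14 : ℕ).divisors, d ^ (k + 1)) ≡ 2 [MOD Nat.totient 14] := by
  have hp7 : 7 ≤ p := by omega
  have hpr : p = 2 * r + 1 := by
    have := hp.two_le
    have hodd : p % 2 = 1 := by omega
    omega
  have hr3 : 3 ≤ r := by omega
  have hrodd : r % 2 = 1 := by omega
  -- totient(2p) = 2r
  have htot : (2 * p).totient = 2 * r := by
    rw [Nat.totient_mul (by
      exact (Nat.coprime_primes Nat.prime_two hp).2 (by omega)), Nat.totient_two,
      Nat.totient_prime hp]
    omega
  have hdiv : (2 * p).divisors = {1, 2, p, 2 * p} := by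
    rw [Nat.divisors_mul, Nat.Prime.divisors hp, Nat.Prime.divisors Nat.prime_two]
    ext d
    simp [Finset.mem_mul]
    omega
  have hsum : ∑ d ∈ (2*p).divisors, d ^ k = 1 + 2^k + p^k + (2*p)^k := by
    rw [hdiv]
    rw [Finset.sum_insert (by simp; omega), Finset.sum_insert (by simp; omega),
      Finset.sum_insert (by simp; omega), Finset.sum_singleton]
    ring
  rw [htot, hsum] at h
  -- reduce mod r
  have h' : (2 * p) * (1 + 2^k + p^k + (2*p)^k) ≡ 2 [MOD r] :=
    h.of_dvd ⟨2, by ring⟩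
  rw [← ZMod.natCast_eq_natCast_iff] at h'
  push_cast at h'
  have hpz : (p : ZMod r) = 1 := by
    rw [hpr]; push_cast; simp
  rw [hpz] at h'
  have hz : (2 : ZMod r) * ((2:ZMod r)^(k+1) + 1) = 0 := by
    have : (2 : ZMod r) * (1 + 2^k + 1 + (2 * 1)^k) = 2 := by
      simpa using h'
    have e : (2 : ZMod r) * ((2:ZMod r)^(k+1) + 1) =
        2 * (1 + 2^k + 1 + (2*1)^k) - 2 := by ring
    rw [e, this]; ring
  have h2u : IsUnit (2 : ZMod r) := by
    have : IsUnit ((2 : ℕ) : ZMod r) := (ZMod.isUnit_iff_coprime 2 r).mpr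
      (Nat.coprime_two_left.mpr (Nat.odd_iff.mpr hrodd))
    simpa using this
  have hk1 : (2 : ZMod r) ^ (k+1) = -1 := by
    have := h2u.mul_left_cancel (show (2:ZMod r) * ((2:ZMod r)^(k+1)+1) = 2 * 0 by
      simpa using hz)
    linear_combination this
  -- k+1 is even
  have htle : t₀ ≤ k + 1 := hmin (k+1) (by omega) hk1
  have hone : (2 : ZMod r) ^ (k + 1 - t₀) = 1 := by
    have : (2 : ZMod r) ^ (k + 1 - t₀) * (2:ZMod r)^t₀ = (2:ZMod r)^(k+1) := by
      rw [← pow_add]; congr 1; omega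
    rw [ht, hk1] at this
    have h2 : -((2:ZMod r)^(k+1-t₀)) = -1 := by rw [← this]; ring
    exact neg_inj.mp h2
  have horddvd : orderOf (2 : ZMod r) ∣ k + 1 - t₀ := orderOf_dvd_of_pow_eq_one hone
  have hord2 : orderOf (2 : ZMod r) ∣ 2 * t₀ := by
    apply orderOf_dvd_of_pow_eq_one
    rw [pow_mul']
    rw [ht]; ring
  have hne : (-1 : ZMod r) ≠ 1 := by
    haveI : Fact (2 < r) := ⟨by omega⟩
    exact ZMod.neg_one_ne_one
  have hordeven : 2 ∣ orderOf (2 : ZMod r) := by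
    by_contra hodd
    have hcop : Nat.Coprime (orderOf (2 : ZMod r)) 2 := by
      rw [Nat.coprime_two_right, Nat.odd_iff]
      omega
    have : orderOf (2 : ZMod r) ∣ t₀ := (Nat.Coprime.dvd_of_dvd_mul_left hcop hord2)
    have := orderOf_dvd_iff_pow_eq_one.mp this
    rw [ht] at this
    exact hne this
  have hkeven : Even (k + 1) := by
    have h1 : 2 ∣ k + 1 - t₀ := hordeven.trans horddvd
    obtain ⟨j, hj⟩ := hte
    rw [Nat.even_iff]
    omega
  have hkodd : k % 2 = 1 := by
    rw [Nat.even_iff] at hkeven; omega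
  constructor
  · exact aux14 _ (by rw [Nat.even_iff]; omega)
  · exact aux14 _ hkeven
end

section
/- If 2^{k+2} + 3 is prime for some k ≥ 0, then n = 2(2^{k+2} + 3) is composite and satisfies n · σ_k(n) ≡ 2 (mod φ(n)), and n = 2^{k+3} + 6. -/
open ArithmeticFunction in
theorem stmt_19 (k : ℕ) (hp : Nat.Prime (2 ^ (k + 2) + 3)) :
    ¬ Nat.Prime (2 * (2 ^ (k + 2) + 3)) ∧ 1 < 2 * (2 ^ (k + 2) + 3) ∧
    (2 * (2 ^ (k + 2) + 3)) * (∑ d ∈ (2 * (2 ^ (k + 2) + 3)).divisors, d ^ k) ≡ 2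
      [MOD (2 * (2 ^ (k + 2) + 3)).totient] ∧
    2 * (2 ^ (k + 2) + 3) = 2 ^ (k + 3) + 6 := by
  set p := 2 ^ (k + 2) + 3 with hpdef
  have hp7 : 7 ≤ p := by
    have : 4 ≤ 2 ^ (k + 2) := by
      calc 4 = 2 ^ 2 := by norm_num
      _ ≤ 2 ^ (k + 2) := Nat.pow_le_pow_right (by norm_num) (by omega)
    omega
  have hpodd : p ≠ 2 := by omega
  have hcop : Nat.Coprime 2 p := ((Nat.coprime_primes hp Nat.prime_two).mpr (by omega)).symm
  refine ⟨?_, by omega, ?_, by ring⟩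
  · rw [Nat.prime_mul_iff]
    rintro (⟨_, h1⟩ | ⟨_, h2⟩) <;> omega
  · have htot : (2 * p).totient = p - 1 := by
      rw [Nat.totient_mul hcop, Nat.totient_two, Nat.totient_prime hp, one_mul]
    have hsum : (∑ d ∈ (2 * p).divisors, d ^ k) = (1 + 2 ^ k) * (1 + p ^ k) := by
      rw [← sigma_apply, isMultiplicative_sigma.map_mul_of_coprime hcop,
        sigma_apply, sigma_apply, Nat.Prime.divisors Nat.prime_two, Nat.Prime.divisors hp]
      rw [Finset.sum_insert (by simp only [Finset.mem_singleton]; omega), Finset.sum_singleton,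
        Finset.sum_insert (by simp only [Finset.mem_singleton]; omega), Finset.sum_singleton]
      ring
    rw [htot, hsum]
    set m := p - 1 with hm
    have hpm : p = m + 1 := by omega
    have h1 : p ≡ 1 [MOD m] := by rw [hpm]; simpa using Nat.add_modEq_left (n := m) (a := 1)
    have hpk : p ^ k ≡ 1 [MOD m] := by simpa using h1.pow k
    have : 2 * p * ((1 + 2 ^ k) * (1 + p ^ k)) ≡ 2 * 1 * ((1 + 2 ^ k) * (1 + 1)) [MOD m] :=
      ((Nat.ModEq.refl 2).mul h1).mul ((Nat.ModEq.refl _).mul ((Nat.ModEq.refl 1).add hpk))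
    refine this.trans ?_
    have hexp : 2 * 1 * ((1 + 2 ^ k) * (1 + 1)) = m + 2 := by
      have : m = 2 ^ (k + 2) + 2 := by omega
      rw [this]; ring
    rw [hexp]
    simpa using Nat.add_modEq_left (n := m) (a := 2)
end
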